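/- arXiv:math/0610097 — 7 statements merged into one kernel-verified Lean document; each statement's English description precedes it below -/
import Mathlib

section
/- Let n ≥ 1, let X, Y ∈ Mat_n(ℂ), let i ∈ ℂⁿ, and let j : ℂⁿ → ℂ be a ℂ-linear functional. Suppose that X·Y − Y·X + i·jᵀ = 0, where i·jᵀ denotes the rank-one matrix acting by v ↦ (j v)·i. Suppose moreover the stability condition: the only linear subspace W ⊆ ℂⁿ that contains i and is invariant under both X and Y is W = ℂⁿ. Then j = 0, and consequently X·Y = Y·X. -/
/-!
Write `D = XY - YX = -ij`. Then `j (M i) = -tr (M D)` for every operator `M`, and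
`tr (Xᵃ [X, Y^(b+1)]) = 0` by cyclicity of the trace. Expanding `[X, Y^(b+1)]` as the sum of
the `Yᵖ D Y^q` with `p + q = b` turns this into `∑_{p+q=b} j (Y^q Xᵃ Yᵖ i) = 0`. If `j` kills all
shorter words in `X`, `Y` applied to `i`, then `X` and `Y` commute on those words, so all
`b + 1` terms equal `j (Yᵇ Xᵃ i)`, which therefore vanishes in characteristic zero. By induction
on the length, `j` kills every word applied to `i`; these vectors span a subspace which contains
`i` and is invariant under `X` and `Y`, so by stability it is everything and `j = 0`.
-/

open Finset

theorem mul_pow_succ_sub_pow_succ_mul {R : Type*} [Ring R] (x y : R) (b : ℕ) :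
    x * y ^ (b + 1) - y ^ (b + 1) * x =
      ∑ p ∈ antidiagonal b, y ^ p.1 * (x * y - y * x) * y ^ p.2 := by
  induction b with
  | zero => simp
  | succ b ih =>
    rw [Nat.sum_antidiagonal_succ']
    simp only [pow_succ, ← mul_assoc, ← sum_mul, ← ih]
    noncomm_ring

theorem List.perm_replicate_false_append_replicate_true {u : List Bool} {m k : ℕ}
    (hm : u.count false = m) (hk : u.count true = k) :
    u.Perm (replicate m false ++ replicate k true) :=
  (perm_replicate_append_replicate Bool.false_ne_true).2 ⟨hm, hk, fun c _ => by cases c <;> simp⟩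

theorem LinearMap.mul_smulRight {R M : Type*} [CommSemiring R] [AddCommMonoid M] [Module R M]
    (f : Module.End R M) (g : Module.Dual R M) (x : M) :
    f * g.smulRight x = g.smulRight (f x) := by
  ext v
  simp

namespace ADHM

variable {K V : Type*} [Field K] [AddCommGroup V] [Module K V]

/-- The value of a word in the letters `true ↦ X`, `false ↦ Y`. -/
def evalWord (X Y : Module.End K V) (w : List Bool) : Module.End K V :=
  (w.map fun b => cond b X Y).prod

def IsStable (X Y : Module.End K V) (i : V) : Prop :=
  ∀ W : Submodule K V, i ∈ W → W ∈ X.invtSubmodule → W ∈ Y.invtSubmodule → W = ⊤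

variable {X Y : Module.End K V} {i : V} {j : Module.Dual K V}

@[simp]
theorem evalWord_cons_apply (b : Bool) (w : List Bool) (v : V) :
    evalWord X Y (b :: w) v = cond b X Y (evalWord X Y w v) := rfl

@[simp]
theorem evalWord_append (u w : List Bool) :
    evalWord X Y (u ++ w) = evalWord X Y u * evalWord X Y w := by
  simp [evalWord]

@[simp]
theorem evalWord_replicate (m : ℕ) (b : Bool) :
    evalWord X Y (List.replicate m b) = cond b X Y ^ m := by
  simp [evalWord]

theorem apply_apply_comm_of_dual_eq_zero (hμ : X * Y - Y * X + j.smulRight i = 0) {v : V}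
    (hv : j v = 0) : X (Y v) = Y (X v) := by
  simpa [hv, sub_eq_zero] using LinearMap.congr_fun hμ v

theorem evalWord_apply_eq_of_perm (hμ : X * Y - Y * X + j.smulRight i = 0) {L : ℕ}
    (hshort : ∀ u : List Bool, u.length < L → j (evalWord X Y u i) = 0)
    {w₁ w₂ : List Bool} (hw : w₁.Perm w₂) (hlen : w₁.length ≤ L) :
    evalWord X Y w₁ i = evalWord X Y w₂ i := by
  induction hw with
  | nil => rfl
  | cons b _ ih => simp [ih (by simp at hlen; omega)]
  | swap a b u =>
    have hu := hshort u (by simp at hlen; omega)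
    cases a <;> cases b <;>
      simp [apply_apply_comm_of_dual_eq_zero hμ hu]
  | trans h₁₂ _ ih₁₂ ih₂₃ => rw [ih₁₂ hlen, ih₂₃ (h₁₂.length_eq ▸ hlen)]

theorem sum_antidiagonal_dual_apply_eq_zero [FiniteDimensional K V]
    (hμ : X * Y - Y * X + j.smulRight i = 0) (a b : ℕ) :
    ∑ p ∈ antidiagonal b, j ((Y ^ p.2 * X ^ a * Y ^ p.1) i) = 0 := by
  have hD : X * Y - Y * X = -j.smulRight i := eq_neg_of_add_eq_zero_left hμ
  have hcyc : LinearMap.trace K V (X ^ a * (X * Y ^ (b + 1) - Y ^ (b + 1) * X)) = 0 := by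
    rw [mul_sub, map_sub, ← mul_assoc, ← pow_succ, ← mul_assoc, LinearMap.trace_mul_comm _ _ X,
      ← mul_assoc, ← pow_succ', sub_self]
  rw [mul_pow_succ_sub_pow_succ_mul, mul_sum, map_sum] at hcyc
  rw [← neg_eq_zero, ← hcyc, ← sum_neg_distrib]
  refine sum_congr rfl fun p _ => ?_
  rw [← mul_assoc, LinearMap.trace_mul_comm, hD]
  simp only [mul_neg, map_neg, mul_assoc, LinearMap.mul_smulRight, LinearMap.trace_smulRight,
    Module.End.mul_apply]

theorem dual_apply_pow_mul_pow_eq_zero [FiniteDimensional K V] [CharZero K]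
    (hμ : X * Y - Y * X + j.smulRight i = 0) {a b : ℕ}
    (hshort : ∀ u : List Bool, u.length < b + a → j (evalWord X Y u i) = 0) :
    j ((Y ^ b * X ^ a) i) = 0 := by
  have hterm (p) (hp : p ∈ antidiagonal b) :
      j ((Y ^ p.2 * X ^ a * Y ^ p.1) i) = j ((Y ^ b * X ^ a) i) := by
    rw [HasAntidiagonal.mem_antidiagonal] at hp
    have hperm : (List.replicate p.2 false ++ .replicate a true ++ .replicate p.1 false).Perm
        (.replicate b false ++ .replicate a true) :=
      List.perm_replicate_false_append_replicate_true (by simp [List.count_replicate]; omega)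
        (by simp [List.count_replicate])
    simpa using congrArg j (evalWord_apply_eq_of_perm hμ hshort hperm (by simp; omega))
  have h := sum_antidiagonal_dual_apply_eq_zero hμ a b
  rw [sum_congr rfl hterm, sum_const, Nat.card_antidiagonal, nsmul_eq_zero_iff] at h
  exact h.resolve_right b.succ_ne_zero

theorem dual_evalWord_apply_eq_zero [FiniteDimensional K V] [CharZero K]
    (hμ : X * Y - Y * X + j.smulRight i = 0) (w : List Bool) :
    j (evalWord X Y w i) = 0 := by
  induction hL : w.length using Nat.strong_induction_on generalizing w with
  | _ L ih =>
  rw [← hL, ← List.count_false_add_count_true] at ih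
  have hshort (u : List Bool) (hu : u.length < w.count false + w.count true) :
      j (evalWord X Y u i) = 0 := ih _ hu u rfl
  rw [evalWord_apply_eq_of_perm hμ hshort (List.perm_replicate_false_append_replicate_true rfl rfl)
    (w.count_false_add_count_true).ge, evalWord_append, evalWord_replicate, evalWord_replicate]
  exact dual_apply_pow_mul_pow_eq_zero hμ hshort

theorem span_evalWord_apply_mem_invtSubmodule (b : Bool) :
    Submodule.span K (Set.range fun w => evalWord X Y w i) ∈ (cond b X Y).invtSubmodule :=
  Submodule.span_le.2 <| by
    rintro _ ⟨w, rfl⟩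
    exact Submodule.subset_span ⟨b :: w, rfl⟩

theorem dual_eq_zero_of_isStable [FiniteDimensional K V] [CharZero K]
    (hμ : X * Y - Y * X + j.smulRight i = 0) (hstab : IsStable X Y i) : j = 0 := by
  have hspan : Submodule.span K (Set.range fun w => evalWord X Y w i) = ⊤ :=
    hstab _ (Submodule.subset_span ⟨[], rfl⟩) (span_evalWord_apply_mem_invtSubmodule true)
      (span_evalWord_apply_mem_invtSubmodule false)
  have hker : Submodule.span K (Set.range fun w => evalWord X Y w i) ≤ LinearMap.ker j :=
    Submodule.span_le.2 <| by
      rintro _ ⟨w, rfl⟩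
      exact dual_evalWord_apply_eq_zero hμ w
  exact LinearMap.ker_eq_top.1 (top_le_iff.1 (hspan ▸ hker))

end ADHM

theorem adhm_stability_forces_j_zero_general (n : ℕ)
    (X Y : Matrix (Fin n) (Fin n) ℂ) (i : Fin n → ℂ)
    (j : (Fin n → ℂ) →ₗ[ℂ] ℂ)
    (hmu : ∀ v : Fin n → ℂ, (X * Y - Y * X).mulVec v + j v • i = 0)
    (hstab : ∀ W : Submodule ℂ (Fin n → ℂ), i ∈ W →
      (∀ w ∈ W, X.mulVec w ∈ W) → (∀ w ∈ W, Y.mulVec w ∈ W) → W = ⊤) :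
    j = 0 ∧ X * Y = Y * X := by
  have hμ : X.mulVecLin * Y.mulVecLin - Y.mulVecLin * X.mulVecLin + j.smulRight i = 0 :=
    LinearMap.ext fun v => by simpa [Matrix.sub_mulVec, Matrix.mulVec_mulVec] using hmu v
  have hj : j = 0 := ADHM.dual_eq_zero_of_isStable hμ hstab
  refine ⟨hj, sub_eq_zero.1 (Matrix.mulVec_injective (funext fun v => ?_))⟩
  simpa [hj] using hmu v

/-- ADHM stability forces `j = 0`: if `X·Y − Y·X + i·jᵀ = 0` (where `i·jᵀ` is the rank-one
operator `v ↦ (j v) • i`) and the only subspace of `ℂⁿ` containing `i` and invariant under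
both `X` and `Y` is all of `ℂⁿ`, then `j = 0` and `X` and `Y` commute. -/
theorem adhm_stability_forces_j_zero (n : ℕ) (hn : 1 ≤ n)
    (X Y : Matrix (Fin n) (Fin n) ℂ) (i : Fin n → ℂ)
    (j : (Fin n → ℂ) →ₗ[ℂ] ℂ)
    (hmu : ∀ v : Fin n → ℂ, (X * Y - Y * X).mulVec v + j v • i = 0)
    (hstab : ∀ W : Submodule ℂ (Fin n → ℂ), i ∈ W →
      (∀ w ∈ W, X.mulVec w ∈ W) → (∀ w ∈ W, Y.mulVec w ∈ W) → W = ⊤) :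
    j = 0 ∧ X * Y = Y * X :=
  adhm_stability_forces_j_zero_general n X Y i j hmu hstab
end

section
/- Fix n ≥ 1. Consider triples (X, Y, i) with X, Y ∈ Mat_n(ℂ) satisfying X·Y = Y·X and i ∈ ℂⁿ such that the smallest linear subspace of ℂⁿ containing i and invariant under both X and Y is all of ℂⁿ (equivalently, the vectors X^a Y^b i for a, b ≥ 0 span ℂⁿ). The group GL_n(ℂ) acts on such triples by g·(X, Y, i) = (gXg⁻¹, gYg⁻¹, g·i). Then the map sending (X, Y, i) to the set { f ∈ ℂ[x,y] : f(X,Y)·i = 0 } (where f(X,Y) = Σ c_{ab} X^a Y^b for f = Σ c_{ab} x^a y^b, which is well defined since X and Y commute) induces a bijection from the set of GL_n(ℂ)-orbits of such triples onto the set of ideals I of the polynomial ring ℂ[x,y] with dim_ℂ(ℂ[x,y]/I) = n. -/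
/-- A triple `(X, Y, i)` of two commuting `n × n` complex matrices together with a
cyclic vector `i ∈ ℂⁿ` (its smallest subspace containing `i` and invariant under both
`X` and `Y` is all of `ℂⁿ`). -/
def CommCyclicTriple (n : ℕ) : Type :=
  { t : Matrix (Fin n) (Fin n) ℂ × Matrix (Fin n) (Fin n) ℂ × (Fin n → ℂ) //
      t.1 * t.2.1 = t.2.1 * t.1 ∧
      ∀ W : Submodule ℂ (Fin n → ℂ), t.2.2 ∈ W →
        (∀ w ∈ W, t.1.mulVec w ∈ W) → (∀ w ∈ W, t.2.1.mulVec w ∈ W) → W = ⊤ }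

/-- Evaluation of a polynomial `f = Σ c_{ab} x^a y^b ∈ ℂ[x,y]` at a pair of matrices:
`f(X,Y) = Σ c_{ab} X^a Y^b`. -/
noncomputable def evalMatPair {n : ℕ} (X Y : Matrix (Fin n) (Fin n) ℂ) (f : MvPolynomial (Fin 2) ℂ) :
    Matrix (Fin n) (Fin n) ℂ :=
  f.support.sum fun s => f.coeff s • (X ^ s 0 * Y ^ s 1)

/-- The annihilator of the cyclic vector: `{ f ∈ ℂ[x,y] : f(X,Y)·i = 0 }`. -/
def annSet {n : ℕ} (t : CommCyclicTriple n) : Set (MvPolynomial (Fin 2) ℂ) :=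
  { f | (evalMatPair t.1.1 t.1.2.1 f).mulVec t.1.2.2 = 0 }

/-- The orbit relation for the `GL_n(ℂ)`-action
`g·(X, Y, i) = (g X g⁻¹, g Y g⁻¹, g·i)` on commuting cyclic triples. -/
def trel (n : ℕ) (t t' : CommCyclicTriple n) : Prop :=
  ∃ g : GL (Fin n) ℂ,
    t'.1.1 = (g : Matrix (Fin n) (Fin n) ℂ) * t.1.1 * ((g⁻¹ : GL (Fin n) ℂ) : Matrix (Fin n) (Fin n) ℂ) ∧
    t'.1.2.1 = (g : Matrix (Fin n) (Fin n) ℂ) * t.1.2.1 * ((g⁻¹ : GL (Fin n) ℂ) : Matrix (Fin n) (Fin n) ℂ) ∧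
    t'.1.2.2 = (g : Matrix (Fin n) (Fin n) ℂ).mulVec t.1.2.2


open Matrix MvPolynomial

noncomputable section CCTAux

namespace CCTAux

abbrev Rg : Type := MvPolynomial (Fin 2) ℂ

variable {n : ℕ}

lemma aeval_comm {A : Type*} [Ring A] [Algebra ℂ A] {X Y : A} (h : Commute X Y)
    (p : Polynomial ℂ) : Commute (Polynomial.aeval Y p) X := by
  induction p using Polynomial.induction_on' with
  | add p q hp hq => simpa [map_add] using hp.add_left hq
  | monomial k a =>
      rw [Polynomial.aeval_monomial]
      exact (Algebra.commute_algebraMap_left a X).mul_left ((h.symm).pow_left k)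

/-- Inner evaluation `ℂ[y] → Mat`, sending the variable to `Y`. -/
def innerHom (Y : Matrix (Fin n) (Fin n) ℂ) :
    MvPolynomial (Fin 1) ℂ →ₐ[ℂ] Matrix (Fin n) (Fin n) ℂ :=
  (Polynomial.aeval Y).comp
    ((Polynomial.mapAlgHom (MvPolynomial.isEmptyAlgEquiv ℂ (Fin 0)).toAlgHom).comp
      (MvPolynomial.finSuccEquiv ℂ 0).toAlgHom)

lemma innerHom_comm {X Y : Matrix (Fin n) (Fin n) ℂ} (h : X * Y = Y * X)
    (p : MvPolynomial (Fin 1) ℂ) : Commute (innerHom Y p) X := by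
  simpa [innerHom] using aeval_comm (X := X) (Y := Y) h _

/-- The evaluation algebra morphism `ℂ[x,y] → Mat_n(ℂ)` for commuting `X Y`. -/
def E (X Y : Matrix (Fin n) (Fin n) ℂ) (h : X * Y = Y * X) :
    MvPolynomial (Fin 2) ℂ →ₐ[ℂ] Matrix (Fin n) (Fin n) ℂ :=
  (Polynomial.eval₂AlgHom (innerHom Y) X (innerHom_comm h)).comp
    (MvPolynomial.finSuccEquiv ℂ 1).toAlgHom

@[simp] lemma E_X0 {X Y : Matrix (Fin n) (Fin n) ℂ} (h : X * Y = Y * X) :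
    E X Y h (MvPolynomial.X 0) = X := by
  rw [E, AlgHom.comp_apply]
  rw [show (MvPolynomial.finSuccEquiv ℂ 1).toAlgHom (MvPolynomial.X 0) = Polynomial.X from
    MvPolynomial.finSuccEquiv_X_zero]
  rw [Polynomial.eval₂AlgHom_apply, Polynomial.eval₂_X]

@[simp] lemma E_X1 {X Y : Matrix (Fin n) (Fin n) ℂ} (h : X * Y = Y * X) :
    E X Y h (MvPolynomial.X 1) = Y := by
  have h1 : (1 : Fin 2) = Fin.succ 0 := rfl
  rw [E, AlgHom.comp_apply, h1]
  rw [show (MvPolynomial.finSuccEquiv ℂ 1).toAlgHom (MvPolynomial.X (Fin.succ 0))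
      = Polynomial.C (MvPolynomial.X 0) from MvPolynomial.finSuccEquiv_X_succ]
  rw [Polynomial.eval₂AlgHom_apply, Polynomial.eval₂_C]
  show innerHom Y (MvPolynomial.X 0) = Y
  rw [show innerHom Y (MvPolynomial.X 0) = Polynomial.aeval Y
      ((Polynomial.mapAlgHom (MvPolynomial.isEmptyAlgEquiv ℂ (Fin 0)).toAlgHom)
        ((MvPolynomial.finSuccEquiv ℂ 0).toAlgHom (MvPolynomial.X 0))) from rfl]
  rw [show (MvPolynomial.finSuccEquiv ℂ 0).toAlgHom (MvPolynomial.X 0) = Polynomial.X from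
    MvPolynomial.finSuccEquiv_X_zero]
  simp

lemma E_congr {X Y X' Y' : Matrix (Fin n) (Fin n) ℂ} (h : X * Y = Y * X)
    (hX : X = X') (hY : Y = Y') (h' : X' * Y' = Y' * X') : E X Y h = E X' Y' h' := by
  subst hX; subst hY; rfl

/-- Any algebra hom out of `ℂ[x,y]` is the evaluation at the images of the variables. -/
lemma E_eq_algHom (F : Rg →ₐ[ℂ] Matrix (Fin n) (Fin n) ℂ)
    (h : F (MvPolynomial.X 0) * F (MvPolynomial.X 1)
        = F (MvPolynomial.X 1) * F (MvPolynomial.X 0)) :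
    E (F (MvPolynomial.X 0)) (F (MvPolynomial.X 1)) h = F := by
  apply MvPolynomial.algHom_ext
  intro i
  fin_cases i <;> simp

lemma finsupp_fin2 (s : Fin 2 →₀ ℕ) :
    s = Finsupp.single 0 (s 0) + Finsupp.single 1 (s 1) := by
  ext i
  fin_cases i <;> simp [Finsupp.single_apply]

lemma monomial_eq_fin2 (s : Fin 2 →₀ ℕ) (c : ℂ) :
    (monomial s c : Rg) = MvPolynomial.C c * MvPolynomial.X 0 ^ s 0 * MvPolynomial.X 1 ^ s 1 := by
  rw [MvPolynomial.monomial_eq, mul_assoc]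
  congr 1
  conv_lhs => rw [finsupp_fin2 s]
  rw [Finsupp.prod_add_index' (fun i => pow_zero _) (fun i b₁ b₂ => pow_add _ _ _)]
  simp [Finsupp.prod_single_index]

lemma E_monomial {X Y : Matrix (Fin n) (Fin n) ℂ} (h : X * Y = Y * X) (s : Fin 2 →₀ ℕ) (c : ℂ) :
    E X Y h (monomial s c) = c • (X ^ s 0 * Y ^ s 1) := by
  rw [monomial_eq_fin2, _root_.map_mul, _root_.map_mul, map_pow, map_pow, E_X0, E_X1]
  rw [show (MvPolynomial.C c : Rg) = algebraMap ℂ Rg c from rfl, AlgHom.commutes,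
    Algebra.smul_def, mul_assoc]

lemma evalMatPair_eq {X Y : Matrix (Fin n) (Fin n) ℂ} (h : X * Y = Y * X) (f : Rg) :
    evalMatPair X Y f = E X Y h f := by
  conv_rhs => rw [f.as_sum]
  rw [map_sum, evalMatPair]
  exact Finset.sum_congr rfl fun s hs => (E_monomial h s _).symm

section Triple

variable (t : CommCyclicTriple n)

lemma mem_annSet_iff (f : Rg) :
    f ∈ annSet t ↔ (E t.1.1 t.1.2.1 t.2.1 f).mulVec t.1.2.2 = 0 := by
  unfold annSet
  rw [Set.mem_setOf_eq, evalMatPair_eq t.2.1]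

/-- The linear map `f ↦ f(X,Y)·i`. -/
def Lmap : Rg →ₗ[ℂ] (Fin n → ℂ) where
  toFun f := (E t.1.1 t.1.2.1 t.2.1 f).mulVec t.1.2.2
  map_add' f g := by
    show (E t.1.1 t.1.2.1 t.2.1 (f + g)).mulVec t.1.2.2 = _
    rw [map_add, Matrix.add_mulVec]
  map_smul' c f := by
    show (E t.1.1 t.1.2.1 t.2.1 (c • f)).mulVec t.1.2.2 = _
    rw [_root_.map_smul, Matrix.smul_mulVec]
    rfl

lemma Lmap_apply (f : Rg) : Lmap t f = (E t.1.1 t.1.2.1 t.2.1 f).mulVec t.1.2.2 := rfl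

lemma Lmap_surjective : Function.Surjective (Lmap t) := by
  rw [← LinearMap.range_eq_top]
  apply t.2.2 (LinearMap.range (Lmap t))
  · exact ⟨1, by simp [Lmap_apply, Matrix.one_mulVec]⟩
  · rintro w ⟨f, rfl⟩
    exact ⟨MvPolynomial.X 0 * f, by
      simp [Lmap_apply, _root_.map_mul, Matrix.mulVec_mulVec]⟩
  · rintro w ⟨f, rfl⟩
    exact ⟨MvPolynomial.X 1 * f, by
      simp [Lmap_apply, _root_.map_mul, Matrix.mulVec_mulVec]⟩

/-- The annihilator ideal of a commuting cyclic triple. -/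
def annIdeal : Ideal Rg where
  carrier := annSet t
  add_mem' := by
    intro f g hf hg
    have hf' : f ∈ annSet t := hf
    have hg' : g ∈ annSet t := hg
    show f + g ∈ annSet t
    rw [mem_annSet_iff] at hf' hg' ⊢
    rw [map_add, Matrix.add_mulVec, hf', hg', add_zero]
  zero_mem' := by
    show (0 : Rg) ∈ annSet t
    rw [mem_annSet_iff, map_zero, Matrix.zero_mulVec]
  smul_mem' := by
    intro g f hf
    have hf' : f ∈ annSet t := hf
    show g • f ∈ annSet t
    rw [mem_annSet_iff] at hf' ⊢
    rw [smul_eq_mul, _root_.map_mul, ← Matrix.mulVec_mulVec, hf', Matrix.mulVec_zero]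

lemma mem_annIdeal_iff (f : Rg) : f ∈ annIdeal t ↔ Lmap t f = 0 :=
  mem_annSet_iff t f

lemma ker_Lmap : LinearMap.ker (Lmap t) = (annIdeal t).restrictScalars ℂ := by
  ext f
  rw [LinearMap.mem_ker, Submodule.restrictScalars_mem, mem_annIdeal_iff]

/-- The induced linear map `ℂ[x,y]/I → ℂⁿ`. -/
def qmap : (Rg ⧸ annIdeal t) →ₗ[ℂ] (Fin n → ℂ) :=
  (Submodule.liftQ ((annIdeal t).restrictScalars ℂ) (Lmap t) (le_of_eq (ker_Lmap t).symm)).comp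
    (Submodule.Quotient.restrictScalarsEquiv ℂ (annIdeal t)).symm.toLinearMap

lemma qmap_mk (f : Rg) : qmap t (Ideal.Quotient.mk (annIdeal t) f) = Lmap t f := by
  have h1 : (Submodule.Quotient.restrictScalarsEquiv ℂ (annIdeal t)).symm
      (Ideal.Quotient.mk (annIdeal t) f) = Submodule.Quotient.mk f :=
    (LinearEquiv.symm_apply_eq _).mpr
      (Submodule.Quotient.restrictScalarsEquiv_mk ℂ (annIdeal t) f).symm
  rw [qmap, LinearMap.comp_apply, LinearEquiv.coe_toLinearMap, h1, Submodule.liftQ_apply]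

lemma qmap_bijective : Function.Bijective (qmap t) := by
  constructor
  · intro a b hab
    obtain ⟨f, rfl⟩ := Ideal.Quotient.mk_surjective a
    obtain ⟨g, rfl⟩ := Ideal.Quotient.mk_surjective b
    rw [qmap_mk, qmap_mk] at hab
    rw [Ideal.Quotient.mk_eq_mk_iff_sub_mem, mem_annIdeal_iff, map_sub, hab, sub_self]
  · intro v
    obtain ⟨f, hf⟩ := Lmap_surjective t v
    exact ⟨Ideal.Quotient.mk _ f, by rw [qmap_mk, hf]⟩

/-- `ℂ[x,y]/I ≅ ℂⁿ`. -/
def quotEquivT : (Rg ⧸ annIdeal t) ≃ₗ[ℂ] (Fin n → ℂ) :=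
  LinearEquiv.ofBijective (qmap t) (qmap_bijective t)

lemma quotEquivT_mk (f : Rg) :
    quotEquivT t (Ideal.Quotient.mk (annIdeal t) f) = Lmap t f := qmap_mk t f

lemma finrank_ann : Module.finrank ℂ (Rg ⧸ annIdeal t) = n := by
  rw [(quotEquivT t).finrank_eq, Module.finrank_fin_fun]

end Triple

section IdealSide

variable (I : Ideal Rg) (b : Module.Basis (Fin n) ℂ (Rg ⧸ I))

/-- The multiplication-operator algebra morphism `ℂ[x,y] → Mat_n(ℂ)` in the basis `b`. -/
def Mhom : Rg →ₐ[ℂ] Matrix (Fin n) (Fin n) ℂ :=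
  (LinearMap.toMatrixAlgEquiv b).toAlgHom.comp
    ((Algebra.lmul ℂ (Rg ⧸ I)).comp (Ideal.Quotient.mkₐ ℂ I))

lemma Mhom_apply (f : Rg) :
    Mhom I b f = LinearMap.toMatrix b b (LinearMap.mulLeft ℂ (Ideal.Quotient.mk I f)) := by
  have h1 : Mhom I b f
      = LinearMap.toMatrixAlgEquiv b (LinearMap.mulLeft ℂ (Ideal.Quotient.mk I f)) := rfl
  rw [h1]
  ext i j
  rw [LinearMap.toMatrixAlgEquiv_apply, LinearMap.toMatrix_apply]

lemma Mhom_mulVec (f : Rg) (q : Rg ⧸ I) :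
    (Mhom I b f).mulVec (b.equivFun q) = b.equivFun (Ideal.Quotient.mk I f * q) := by
  rw [Mhom_apply, Module.Basis.equivFun_apply, Module.Basis.equivFun_apply, LinearMap.toMatrix_mulVec_repr]
  rfl

/-- The commuting cyclic triple associated to an ideal with a chosen basis of the quotient. -/
def bTriple : CommCyclicTriple n := by
  refine ⟨(Mhom I b (MvPolynomial.X 0), Mhom I b (MvPolynomial.X 1),
      b.equivFun (Ideal.Quotient.mk I 1)), ?_, ?_⟩
  · rw [← _root_.map_mul, ← _root_.map_mul, mul_comm]
  · intro W hW hXW hYW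
    have key : ∀ f : Rg, ∀ q : Rg ⧸ I, b.equivFun q ∈ W →
        b.equivFun (Ideal.Quotient.mk I f * q) ∈ W := by
      intro f
      induction f using MvPolynomial.induction_on with
      | C c =>
          intro q hq
          have : Ideal.Quotient.mk I (MvPolynomial.C c) * q = c • q := by
            rw [show (MvPolynomial.C c : Rg) = algebraMap ℂ Rg c from rfl,
              ← Ideal.Quotient.mkₐ_eq_mk ℂ I, AlgHom.commutes, ← Algebra.smul_def]
          rw [this, _root_.map_smul]
          exact W.smul_mem c hq
      | add p r hp hr =>
          intro q hq
          rw [map_add, add_mul, map_add]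
          exact W.add_mem (hp q hq) (hr q hq)
      | mul_X p i hp =>
          intro q hq
          have hmul : Ideal.Quotient.mk I (p * MvPolynomial.X i) * q
              = Ideal.Quotient.mk I (MvPolynomial.X i) * (Ideal.Quotient.mk I p * q) := by
            rw [_root_.map_mul]
            ring
          rw [hmul]
          have h2 := hp q hq
          fin_cases i
          · have h3 := hXW _ h2
            rwa [Mhom_mulVec] at h3
          · have h3 := hYW _ h2
            rwa [Mhom_mulVec] at h3
    rw [eq_top_iff]
    rintro v -
    obtain ⟨f, hf⟩ := Ideal.Quotient.mk_surjective (b.equivFun.symm v)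
    have h1 := key f (Ideal.Quotient.mk I 1) hW
    rw [show (Ideal.Quotient.mk I) (1 : Rg) = 1 from _root_.map_one _, mul_one, hf] at h1
    rwa [LinearEquiv.apply_symm_apply] at h1

lemma annIdeal_bTriple : annIdeal (bTriple I b) = I := by
  have hcomm : Mhom I b (MvPolynomial.X 0) * Mhom I b (MvPolynomial.X 1)
      = Mhom I b (MvPolynomial.X 1) * Mhom I b (MvPolynomial.X 0) := by
    rw [← _root_.map_mul, ← _root_.map_mul, mul_comm]
  ext f
  have h0 : f ∈ annIdeal (bTriple I b) ↔
      (E (Mhom I b (MvPolynomial.X 0)) (Mhom I b (MvPolynomial.X 1)) hcomm f).mulVec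
        (b.equivFun (Ideal.Quotient.mk I 1)) = 0 := mem_annSet_iff (bTriple I b) f
  rw [h0, E_eq_algHom (Mhom I b) hcomm, Mhom_mulVec,
    show (Ideal.Quotient.mk I) (1 : Rg) = 1 from _root_.map_one _, mul_one]
  rw [show (0 : Fin n → ℂ) = b.equivFun 0 from (map_zero b.equivFun).symm]
  rw [b.equivFun.injective.eq_iff, Ideal.Quotient.eq_zero_iff_mem]

end IdealSide

section Conj

/-- Conjugation by an invertible matrix, as an algebra automorphism-like hom. -/
def conjA (g : (Matrix (Fin n) (Fin n) ℂ)ˣ) :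
    Matrix (Fin n) (Fin n) ℂ →ₐ[ℂ] Matrix (Fin n) (Fin n) ℂ where
  toFun m := ↑g * m * ↑g⁻¹
  map_one' := by
    show (↑g : Matrix (Fin n) (Fin n) ℂ) * 1 * (↑g⁻¹ : Matrix (Fin n) (Fin n) ℂ) = 1
    rw [mul_one, Units.mul_inv]
  map_mul' a c := by
    show (↑g : Matrix (Fin n) (Fin n) ℂ) * (a * c) * (↑g⁻¹ : Matrix (Fin n) (Fin n) ℂ) = ((↑g : Matrix (Fin n) (Fin n) ℂ) * a * (↑g⁻¹ : Matrix (Fin n) (Fin n) ℂ)) * ((↑g : Matrix (Fin n) (Fin n) ℂ) * c * (↑g⁻¹ : Matrix (Fin n) (Fin n) ℂ))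
    simp only [mul_assoc, Units.inv_mul_cancel_left]
  map_zero' := by
    show (↑g : Matrix (Fin n) (Fin n) ℂ) * 0 * (↑g⁻¹ : Matrix (Fin n) (Fin n) ℂ) = 0
    rw [mul_zero, zero_mul]
  map_add' a c := by
    show (↑g : Matrix (Fin n) (Fin n) ℂ) * (a + c) * (↑g⁻¹ : Matrix (Fin n) (Fin n) ℂ) = _
    rw [mul_add, add_mul]
  commutes' c := by
    show (↑g : Matrix (Fin n) (Fin n) ℂ) * algebraMap ℂ (Matrix (Fin n) (Fin n) ℂ) c * (↑g⁻¹ : Matrix (Fin n) (Fin n) ℂ) = _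
    rw [Algebra.algebraMap_eq_smul_one, mul_smul_comm, mul_one, smul_mul_assoc, Units.mul_inv]

lemma annIdeal_trel {t t' : CommCyclicTriple n} (h : trel n t t') :
    annIdeal t' = annIdeal t := by
  obtain ⟨g, hX, hY, hi⟩ := h
  have hc : conjA g (E t.1.1 t.1.2.1 t.2.1 (MvPolynomial.X 0))
        * conjA g (E t.1.1 t.1.2.1 t.2.1 (MvPolynomial.X 1))
      = conjA g (E t.1.1 t.1.2.1 t.2.1 (MvPolynomial.X 1))
        * conjA g (E t.1.1 t.1.2.1 t.2.1 (MvPolynomial.X 0)) := by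
    rw [← _root_.map_mul, ← _root_.map_mul, ← _root_.map_mul, ← _root_.map_mul, mul_comm]
  have hE : E t'.1.1 t'.1.2.1 t'.2.1
      = ((conjA g).comp (E t.1.1 t.1.2.1 t.2.1) : Rg →ₐ[ℂ] Matrix (Fin n) (Fin n) ℂ) := by
    rw [← E_eq_algHom ((conjA g).comp (E t.1.1 t.1.2.1 t.2.1)) hc]
    exact E_congr t'.2.1 (by rw [hX]; simp [conjA, E_X0]) (by rw [hY]; simp [conjA, E_X1]) hc
  ext f
  rw [show (f ∈ annIdeal t') = (f ∈ annSet t') from rfl, mem_annSet_iff,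
    show (f ∈ annIdeal t) = (f ∈ annSet t) from rfl, mem_annSet_iff, hE, hi]
  have hval : ((conjA g).comp (E t.1.1 t.1.2.1 t.2.1)) f
      = (g : Matrix (Fin n) (Fin n) ℂ) * E t.1.1 t.1.2.1 t.2.1 f
        * ((g⁻¹ : GL (Fin n) ℂ) : Matrix (Fin n) (Fin n) ℂ) := rfl
  rw [hval, Matrix.mulVec_mulVec, Units.inv_mul_cancel_right, ← Matrix.mulVec_mulVec]
  constructor
  · intro h0
    have h2 := congrArg (fun v => ((g⁻¹ : GL (Fin n) ℂ) : Matrix (Fin n) (Fin n) ℂ).mulVec v) h0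
    beta_reduce at h2
    rwa [Matrix.mulVec_mulVec, Units.inv_mul, Matrix.one_mulVec, Matrix.mulVec_zero] at h2
  · intro h0
    rw [h0, Matrix.mulVec_zero]

end Conj

/-- The comparison isomorphism between the coordinates from `b` and the cyclic coordinates. -/
def psiT (t : CommCyclicTriple n) (b : Module.Basis (Fin n) ℂ (Rg ⧸ annIdeal t)) :
    (Fin n → ℂ) ≃ₗ[ℂ] (Fin n → ℂ) :=
  b.equivFun.symm.trans (quotEquivT t)

lemma trel_bTriple (t : CommCyclicTriple n) (b : Module.Basis (Fin n) ℂ (Rg ⧸ annIdeal t)) :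
    trel n (bTriple (annIdeal t) b) t := by
  have hcomp : (psiT t b).toLinearMap ∘ₗ (psiT t b).symm.toLinearMap = LinearMap.id := by
    ext v
    simp
  have hcomp' : (psiT t b).symm.toLinearMap ∘ₗ (psiT t b).toLinearMap = LinearMap.id := by
    ext v
    simp
  have hg : ∀ v, (LinearMap.toMatrix' (psiT t b).toLinearMap).mulVec v = psiT t b v := fun v => by
    rw [← Matrix.toLin'_apply, Matrix.toLin'_toMatrix']
    rfl
  have hginv : ∀ v, (LinearMap.toMatrix' (psiT t b).symm.toLinearMap).mulVec v
      = (psiT t b).symm v := fun v => by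
    rw [← Matrix.toLin'_apply, Matrix.toLin'_toMatrix']
    rfl
  have hψs : ∀ v, (psiT t b).symm v = b.equivFun ((quotEquivT t).symm v) := fun v => rfl
  have hψb : ∀ r, psiT t b (b.equivFun r) = quotEquivT t r := fun r => by
    rw [psiT, LinearEquiv.trans_apply, LinearEquiv.symm_apply_apply]
  have hφx : ∀ q : Rg ⧸ annIdeal t,
      quotEquivT t (Ideal.Quotient.mk (annIdeal t) (MvPolynomial.X 0) * q)
      = t.1.1.mulVec (quotEquivT t q) := by
    intro q
    obtain ⟨f, rfl⟩ := Ideal.Quotient.mk_surjective q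
    rw [← _root_.map_mul, quotEquivT_mk, quotEquivT_mk, Lmap_apply, Lmap_apply,
      _root_.map_mul, E_X0, ← Matrix.mulVec_mulVec]
  have hφy : ∀ q : Rg ⧸ annIdeal t,
      quotEquivT t (Ideal.Quotient.mk (annIdeal t) (MvPolynomial.X 1) * q)
      = t.1.2.1.mulVec (quotEquivT t q) := by
    intro q
    obtain ⟨f, rfl⟩ := Ideal.Quotient.mk_surjective q
    rw [← _root_.map_mul, quotEquivT_mk, quotEquivT_mk, Lmap_apply, Lmap_apply,
      _root_.map_mul, E_X1, ← Matrix.mulVec_mulVec]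
  have hφ1 : quotEquivT t (Ideal.Quotient.mk (annIdeal t) 1) = t.1.2.2 := by
    rw [quotEquivT_mk, Lmap_apply, _root_.map_one (E t.1.1 t.1.2.1 t.2.1), Matrix.one_mulVec]
  refine ⟨⟨LinearMap.toMatrix' (psiT t b).toLinearMap,
    LinearMap.toMatrix' (psiT t b).symm.toLinearMap,
    by rw [← LinearMap.toMatrix'_comp, hcomp, LinearMap.toMatrix'_id],
    by rw [← LinearMap.toMatrix'_comp, hcomp', LinearMap.toMatrix'_id]⟩, ?_, ?_, ?_⟩
  · show t.1.1 = LinearMap.toMatrix' (psiT t b).toLinearMap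
        * Mhom (annIdeal t) b (MvPolynomial.X 0)
        * LinearMap.toMatrix' (psiT t b).symm.toLinearMap
    apply (Matrix.toLin' (R := ℂ) (m := Fin n) (n := Fin n)).injective
    apply LinearMap.ext
    intro v
    rw [Matrix.toLin'_apply, Matrix.toLin'_apply, ← Matrix.mulVec_mulVec,
      ← Matrix.mulVec_mulVec, hginv, hψs, Mhom_mulVec, hg, hψb, hφx,
      LinearEquiv.apply_symm_apply]
  · show t.1.2.1 = LinearMap.toMatrix' (psiT t b).toLinearMap
        * Mhom (annIdeal t) b (MvPolynomial.X 1)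
        * LinearMap.toMatrix' (psiT t b).symm.toLinearMap
    apply (Matrix.toLin' (R := ℂ) (m := Fin n) (n := Fin n)).injective
    apply LinearMap.ext
    intro v
    rw [Matrix.toLin'_apply, Matrix.toLin'_apply, ← Matrix.mulVec_mulVec,
      ← Matrix.mulVec_mulVec, hginv, hψs, Mhom_mulVec, hg, hψb, hφy,
      LinearEquiv.apply_symm_apply]
  · show t.1.2.2 = (LinearMap.toMatrix' (psiT t b).toLinearMap).mulVec
        (b.equivFun (Ideal.Quotient.mk (annIdeal t) 1))
    rw [hg, hψb, hφ1]

/-- A choice of basis for `ℂ[x,y]/I` when the quotient has dimension `n > 0`. -/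
noncomputable def basisOf (hn : 0 < n)
    (p : {I : Ideal Rg // Module.finrank ℂ (Rg ⧸ I) = n}) :
    Module.Basis (Fin n) ℂ (Rg ⧸ p.1) :=
  have : FiniteDimensional ℂ (Rg ⧸ p.1) :=
    FiniteDimensional.of_finrank_pos (lt_of_lt_of_eq hn p.2.symm)
  Module.finBasisOfFinrankEq ℂ _ p.2

/-- The forward map on orbits. -/
def fwd : Quot (trel n) → {I : Ideal Rg // Module.finrank ℂ (Rg ⧸ I) = n} :=
  Quot.lift (fun t => ⟨annIdeal t, finrank_ann t⟩)
    (fun _ _ hab => Subtype.ext (annIdeal_trel hab).symm)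

/-- The backward map. -/
noncomputable def bwd (hn : 0 < n) :
    {I : Ideal Rg // Module.finrank ℂ (Rg ⧸ I) = n} → Quot (trel n) :=
  fun p => Quot.mk _ (bTriple p.1 (basisOf hn p))

lemma bwd_fwd (hn : 0 < n) : Function.LeftInverse (bwd hn) (fwd (n := n)) := by
  apply Quot.ind
  intro t
  exact Quot.sound (trel_bTriple t _)

lemma fwd_bwd (hn : 0 < n) : Function.RightInverse (bwd hn) (fwd (n := n)) := by
  intro p
  exact Subtype.ext (annIdeal_bTriple p.1 _)

end CCTAux

end CCTAux

/-- The map `(X, Y, i) ↦ { f ∈ ℂ[x,y] : f(X,Y)·i = 0 }` induces a bijection from the set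
of `GL_n(ℂ)`-orbits of commuting cyclic triples onto the set of ideals `I ⊆ ℂ[x,y]` with
`dim_ℂ ℂ[x,y]/I = n`. -/
theorem commCyclicTriples_orbits_equiv_colength_n_ideals (n : ℕ) (hn : 1 ≤ n) :
    ∃ e : Quot (trel n) ≃
        { I : Ideal (MvPolynomial (Fin 2) ℂ) //
            Module.finrank ℂ (MvPolynomial (Fin 2) ℂ ⧸ I) = n },
      ∀ t : CommCyclicTriple n,
        ((e (Quot.mk (trel n) t)).1 : Set (MvPolynomial (Fin 2) ℂ)) = annSet t :=
  ⟨⟨CCTAux.fwd, CCTAux.bwd hn, CCTAux.bwd_fwd hn, CCTAux.fwd_bwd hn⟩, fun t => rfl⟩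
end

section
/- Let X, Y ∈ Mat_n(ℂ), i ∈ ℂⁿ, and let j : ℂⁿ → ℂ[x] be a ℂ-linear map. On the module ℂ[x]ⁿ ⊕ ℂ[x]ⁿ define the ℂ-linear maps: δ(p,q) = (x·p − X·p + q, x·q − X·q); a₀(p,q) = Ĵ(q), where Ĵ : ℂ[x]ⁿ → ℂ[x] is the unique ℂ-linear map with Ĵ(x^d·e) = x^d·j(e) for all d ≥ 0 and e ∈ ℂⁿ; a₁(p,q) = E(p) + F(q), where E, F : ℂ[x]ⁿ → ℂⁿ are the unique ℂ-linear maps with E(x^d·e) = X^d·e and F(x^d·e) = X^d·Y·e; and î : ℂ[x] → ℂⁿ, î(f) = f(X)·i. Then î ∘ a₀ = a₁ ∘ δ holds (as maps ℂ[x]ⁿ ⊕ ℂ[x]ⁿ → ℂⁿ) if and only if for every v ∈ ℂⁿ one has v + X·Y·v − Y·X·v = (j(v))(X)·i. -/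
/-!
The first component of `δ` is `(x − X)·p + q` and the second is `(x − X)·q`, where `x − X` is the
characteristic matrix of `X`. The map `E` evaluates a vector of polynomials at `X` from the left,
so it kills `(x − X)·p`; hence the square commutes iff `î ∘ Ĵ = E + F ∘ (x − X)` on `ℂ[x]ⁿ`.
Both sides are linear, so this is checked on monomials `x^d·e`, where it becomes
`X^d·(j e)(X)·i = X^d·(e + XYe − YXe)`: the case `d = 0` is the relation, which implies the rest.
-/

open Polynomial Matrix

section Ext

variable {R ι M : Type*} [Semiring R] [Finite ι] [DecidableEq ι] [AddCommMonoid M] [Module R M]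

theorem Polynomial.pi_linearMap_ext {f g : (ι → R[X]) →ₗ[R] M}
    (h : ∀ (d : ℕ) (e : ι → R), f (fun a => C (e a) * X ^ d) = g (fun a => C (e a) * X ^ d)) :
    f = g := by
  refine LinearMap.pi_ext' fun b => lhom_ext' fun d => LinearMap.ext_ring ?_
  have hsingle : (fun a => C (Pi.single b (1 : R) a) * X ^ d) = Pi.single b (monomial d 1) := by
    ext1 a
    rcases eq_or_ne a b with rfl | hab
    · simp [X_pow_eq_monomial]
    · simp [hab]
  simpa [hsingle] using h d (Pi.single b 1)

end Ext

section Charmatrix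

variable {R ι : Type*} [CommRing R] [Fintype ι] [DecidableEq ι]

theorem Matrix.charmatrix_mulVec (M : Matrix ι ι R) (p : ι → R[X]) :
    charmatrix M *ᵥ p = fun a => X * p a - ∑ b, C (M a b) * p b := by
  ext1 a
  simp only [charmatrix, scalar_apply, sub_mulVec, Pi.sub_apply, mulVec_diagonal]
  rfl

theorem Matrix.charmatrix_mulVec_monomial (M : Matrix ι ι R) (d : ℕ) (e : ι → R) :
    charmatrix M *ᵥ (fun a => C (e a) * X ^ d) =
      (fun a => C (e a) * X ^ (d + 1)) - fun a => C ((M *ᵥ e) a) * X ^ d := by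
  rw [charmatrix_mulVec]
  ext1 a
  simp only [Pi.sub_apply, mulVec, dotProduct, map_sum, map_mul, Finset.sum_mul]
  congr 1
  · ring
  · exact Finset.sum_congr rfl fun b _ => by ring

end Charmatrix

section Koszul

variable {R ι : Type*} [CommRing R] [Fintype ι] [DecidableEq ι]
variable {M : Matrix ι ι R} {E : (ι → R[X]) →ₗ[R] (ι → R)}

theorem map_charmatrix_mulVec_eq_zero
    (hE : ∀ (d : ℕ) (e : ι → R), E (fun a => C (e a) * X ^ d) = (M ^ d) *ᵥ e)
    (p : ι → R[X]) : E (charmatrix M *ᵥ p) = 0 := by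
  have hcomp : E ∘ₗ (charmatrix M).mulVecLin.restrictScalars R = 0 :=
    pi_linearMap_ext fun d e => by
      simp only [LinearMap.comp_apply, LinearMap.coe_restrictScalars, mulVecLin_apply,
        charmatrix_mulVec_monomial, map_sub, hE, LinearMap.zero_apply]
      rw [pow_succ, ← mulVec_mulVec, sub_self]
  simpa using LinearMap.congr_fun hcomp p

theorem aeval_mulVec_eq_add_map_charmatrix_mulVec {Y : Matrix ι ι R} {i : ι → R}
    {j : (ι → R) →ₗ[R] R[X]} {Jhat : (ι → R[X]) →ₗ[R] R[X]} {F : (ι → R[X]) →ₗ[R] (ι → R)}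
    (hJ : ∀ (d : ℕ) (e : ι → R), Jhat (fun a => C (e a) * X ^ d) = X ^ d * j e)
    (hE : ∀ (d : ℕ) (e : ι → R), E (fun a => C (e a) * X ^ d) = (M ^ d) *ᵥ e)
    (hF : ∀ (d : ℕ) (e : ι → R), F (fun a => C (e a) * X ^ d) = (M ^ d * Y) *ᵥ e)
    (h : ∀ v, v + (M * Y) *ᵥ v - (Y * M) *ᵥ v = aeval M (j v) *ᵥ i) (q : ι → R[X]) :
    aeval M (Jhat q) *ᵥ i = E q + F (charmatrix M *ᵥ q) := by
  have hcomp : (mulVecBilin R R).flip i ∘ₗ (aeval M).toLinearMap ∘ₗ Jhat =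
      E + F ∘ₗ (charmatrix M).mulVecLin.restrictScalars R :=
    pi_linearMap_ext fun d e => by
      simp only [LinearMap.comp_apply, LinearMap.add_apply, AlgHom.toLinearMap_apply,
        LinearMap.flip_apply, mulVecBilin_apply, LinearMap.coe_restrictScalars,
        hJ, map_mul, map_pow, aeval_X, charmatrix_mulVec_monomial, map_sub, hE, hF, ← mulVec_mulVec,
        ← h e]
      simp only [mulVec_add, mulVec_sub, mulVec_mulVec, pow_succ, mul_assoc]
      abel
  simpa using LinearMap.congr_fun hcomp q

theorem koszul_diagram_commutes_iff {Y : Matrix ι ι R} {i : ι → R}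
    {j : (ι → R) →ₗ[R] R[X]} {Jhat : (ι → R[X]) →ₗ[R] R[X]} {F : (ι → R[X]) →ₗ[R] (ι → R)}
    (hJ : ∀ (d : ℕ) (e : ι → R), Jhat (fun a => C (e a) * X ^ d) = X ^ d * j e)
    (hE : ∀ (d : ℕ) (e : ι → R), E (fun a => C (e a) * X ^ d) = (M ^ d) *ᵥ e)
    (hF : ∀ (d : ℕ) (e : ι → R), F (fun a => C (e a) * X ^ d) = (M ^ d * Y) *ᵥ e) :
    (∀ p q : ι → R[X],
        aeval M (Jhat q) *ᵥ i = E (charmatrix M *ᵥ p + q) + F (charmatrix M *ᵥ q)) ↔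
      ∀ v, v + (M * Y) *ᵥ v - (Y * M) *ᵥ v = aeval M (j v) *ᵥ i := by
  refine ⟨fun H v => ?_, fun h p q => ?_⟩
  · have Hv := H 0 fun a => C (v a) * X ^ 0
    rw [mulVec_zero, zero_add, charmatrix_mulVec_monomial, map_sub, hJ, hE, hF, hF] at Hv
    simpa [mulVec_mulVec, add_sub_assoc] using Hv.symm
  · rw [map_add, map_charmatrix_mulVec_eq_zero hE, zero_add]
    exact aeval_mulVec_eq_add_map_charmatrix_mulVec hJ hE hF h q

end Koszul

/-- The Koszul-data diagram for an `𝒪`-framed `𝒟`-bundle on `𝐀¹` commutes if and only if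
the relation `I + XY − YX = i·j(X)` holds: with `δ(p,q) = (x·p − X·p + q, x·q − X·q)`,
`a₀(p,q) = Ĵ(q)`, `a₁(p,q) = E(p) + F(q)`, and `î(f) = f(X)·i`, where `Ĵ`, `E`, `F` are the
unique `ℂ`-linear maps with `Ĵ(x^d·e) = x^d·j(e)`, `E(x^d·e) = X^d·e`, `F(x^d·e) = X^d·Y·e`,
one has `î ∘ a₀ = a₁ ∘ δ` iff `∀ v, v + X·Y·v − Y·X·v = (j v)(X)·i`. -/
theorem koszul_diagram_commutes_iff_CM_relation (n : ℕ)
    (X Y : Matrix (Fin n) (Fin n) ℂ) (i : Fin n → ℂ)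
    (j : (Fin n → ℂ) →ₗ[ℂ] Polynomial ℂ)
    (Jhat : (Fin n → Polynomial ℂ) →ₗ[ℂ] Polynomial ℂ)
    (hJ : ∀ (d : ℕ) (e : Fin n → ℂ),
      Jhat (fun a => Polynomial.C (e a) * Polynomial.X ^ d) = Polynomial.X ^ d * j e)
    (E : (Fin n → Polynomial ℂ) →ₗ[ℂ] (Fin n → ℂ))
    (hE : ∀ (d : ℕ) (e : Fin n → ℂ),
      E (fun a => Polynomial.C (e a) * Polynomial.X ^ d) = (X ^ d).mulVec e)
    (F : (Fin n → Polynomial ℂ) →ₗ[ℂ] (Fin n → ℂ))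
    (hF : ∀ (d : ℕ) (e : Fin n → ℂ),
      F (fun a => Polynomial.C (e a) * Polynomial.X ^ d) = (X ^ d * Y).mulVec e) :
    (∀ p q : Fin n → Polynomial ℂ,
        (Polynomial.aeval X (Jhat q)).mulVec i =
          E (fun a => Polynomial.X * p a - ∑ b, Polynomial.C (X a b) * p b + q a)
            + F (fun a => Polynomial.X * q a - ∑ b, Polynomial.C (X a b) * q b))
    ↔ (∀ v : Fin n → ℂ,
        v + (X * Y).mulVec v - (Y * X).mulVec v = (Polynomial.aeval X (j v)).mulVec i) := by
  have hδ : ∀ p q : Fin n → ℂ[X],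
      (fun a => Polynomial.X * p a - ∑ b, Polynomial.C (X a b) * p b + q a) =
        charmatrix X *ᵥ p + q := fun p q => by
    rw [charmatrix_mulVec]
    rfl
  simp only [hδ, ← charmatrix_mulVec]
  exact koszul_diagram_commutes_iff hJ hE hF
end

section
/- Let X, Y ∈ Mat_n(ℂ), i ∈ ℂⁿ, and let j : ℂⁿ → ℂ[x] be a ℂ-linear map satisfying: for every v ∈ ℂⁿ, v + X·Y·v − Y·X·v = (j(v))(X)·i. Let h : ℂⁿ → ℂ[x] be any ℂ-linear map, and define the ℂ-linear endomorphism Y′ of ℂⁿ by Y′(v) = Y·v + (h(v))(X)·i and the ℂ-linear map j′ : ℂⁿ → ℂ[x] by j′(v) = j(v) + x·h(v) − h(X·v). Then the transformed data also satisfy the relation: for every v ∈ ℂⁿ, v + X·Y′(v) − Y′(X·v) = (j′(v))(X)·i. -/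
/-! Replacing `Y` by `Y′` adds `(X·h(v)(X) − h(X·v)(X))·i` to the left-hand side. Since
evaluation at `X` is multiplicative, `X·h(v)(X) = (x·h(v))(X)`, so this is exactly the amount
`(x·h(v) − h(X·v))(X)·i` by which `j′` changes the right-hand side. -/

open Polynomial Matrix

theorem Matrix.mulVec_aeval_mulVec {R ι : Type*} [CommSemiring R] [Fintype ι] [DecidableEq ι]
    (X : Matrix ι ι R) (p : R[X]) (w : ι → R) :
    X *ᵥ (aeval X p *ᵥ w) = aeval X (Polynomial.X * p) *ᵥ w := by
  rw [mulVec_mulVec, map_mul, aeval_X]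

/-- Modifying the Koszul data `(X, Y, i, j(x))` of an `𝒪`-framed `𝒟`-bundle on `𝐀¹` by a
chain homotopy `h` yields `(X, Y′, i, j′)` with `Y′(v) = Y·v + (h v)(X)·i` and
`j′(v) = j(v) + x·h(v) − h(X·v)`, and the defining relation
`∀ v, v + X·Y′(v) − Y′(X·v) = (j′ v)(X)·i` is preserved. -/
theorem homotopy_preserves_CM_relation (n : ℕ)
    (X Y : Matrix (Fin n) (Fin n) ℂ) (i : Fin n → ℂ)
    (j h : (Fin n → ℂ) →ₗ[ℂ] Polynomial ℂ)
    (hrel : ∀ v : Fin n → ℂ,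
      v + (X * Y).mulVec v - (Y * X).mulVec v = (Polynomial.aeval X (j v)).mulVec i)
    (Y' : (Fin n → ℂ) →ₗ[ℂ] (Fin n → ℂ))
    (hY' : ∀ v : Fin n → ℂ, Y' v = Y.mulVec v + (Polynomial.aeval X (h v)).mulVec i)
    (j' : (Fin n → ℂ) →ₗ[ℂ] Polynomial ℂ)
    (hj' : ∀ v : Fin n → ℂ, j' v = j v + Polynomial.X * h v - h (X.mulVec v)) :
    ∀ v : Fin n → ℂ,
      v + X.mulVec (Y' v) - Y' (X.mulVec v) = (Polynomial.aeval X (j' v)).mulVec i := by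
  intro v
  calc v + X *ᵥ Y' v - Y' (X *ᵥ v)
      = (v + (X * Y) *ᵥ v - (Y * X) *ᵥ v)
          + (X *ᵥ (aeval X (h v) *ᵥ i) - aeval X (h (X *ᵥ v)) *ᵥ i) := by
        simp only [hY', mulVec_add, mulVec_mulVec]
        abel
    _ = aeval X (j' v) *ᵥ i := by
        rw [hrel, mulVec_aeval_mulVec, hj', map_sub, map_add, sub_mulVec, add_mulVec,
          add_sub_assoc]
end

section
/- Let X ∈ Mat_n(ℂ) and let h : ℂⁿ → ℂ[x] be a ℂ-linear map such that for every v ∈ ℂⁿ the polynomial x·h(v) − h(X·v) is constant (has degree ≤ 0). Then h = 0. -/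
/-- If `h : ℂⁿ → ℂ[x]` is `ℂ`-linear and `x·h(v) − h(X·v)` is a constant polynomial
(degree `≤ 0`) for every `v`, then `h = 0`. -/
theorem homotopy_with_constant_defect_is_zero (n : ℕ)
    (X : Matrix (Fin n) (Fin n) ℂ)
    (h : (Fin n → ℂ) →ₗ[ℂ] Polynomial ℂ)
    (hc : ∀ v : Fin n → ℂ, (Polynomial.X * h v - h (X.mulVec v)).degree ≤ 0) :
    h = 0 := by
  -- uniform degree bound
  set D : WithBot ℕ := Finset.univ.sup (fun i : Fin n => (h (Pi.single i 1)).degree) with hD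
  have hbound : ∀ v : Fin n → ℂ, (h v).degree ≤ D := by
    intro v
    have hv : v = ∑ i : Fin n, v i • (Pi.single i 1 : Fin n → ℂ) := by
      ext j
      simp [Finset.sum_apply, Pi.single_apply]
    rw [hv, map_sum]
    refine le_trans (Polynomial.degree_sum_le _ _) ?_
    refine Finset.sup_le fun i _ => ?_
    rw [map_smul]
    exact le_trans (Polynomial.degree_smul_le _ _)
      (Finset.le_sup (f := fun i : Fin n => (h (Pi.single i 1)).degree) (Finset.mem_univ i))
  -- key step: degree grows by 1
  have key : ∀ w : Fin n → ℂ, h w ≠ 0 →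
      (h (X.mulVec w)).degree = (h w).degree + 1 := by
    intro w hw
    have hp : (Polynomial.X * h w).degree = (h w).degree + 1 := by
      rw [Polynomial.degree_mul, Polynomial.degree_X, add_comm]
    have hlt : (Polynomial.X * h w - h (X.mulVec w)).degree <
        (Polynomial.X * h w).degree := by
      refine lt_of_le_of_lt (hc w) ?_
      rw [hp, Polynomial.degree_eq_natDegree hw]
      exact_mod_cast Nat.zero_lt_succ _
    have heq : h (X.mulVec w) = Polynomial.X * h w - (Polynomial.X * h w - h (X.mulVec w)) := by
      ring
    rw [heq, Polynomial.degree_sub_eq_left_of_degree_lt hlt, hp]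
  -- conclude
  refine LinearMap.ext fun v => ?_
  show h v = 0
  by_contra hv'
  obtain hk := Polynomial.degree_eq_natDegree hv'
  set k : ℕ := (h v).natDegree
  have iter : ∀ m : ℕ, (h ((X ^ m).mulVec v)).degree = (k : WithBot ℕ) + m := by
    intro m
    induction m with
    | zero => simpa using hk
    | succ m ih =>
      have hne : h ((X ^ m).mulVec v) ≠ 0 := by
        intro hz
        rw [hz, Polynomial.degree_zero] at ih
        exact absurd ih.symm (by exact_mod_cast WithBot.coe_ne_bot)
      have hpw : (X ^ (m + 1)).mulVec v = X.mulVec ((X ^ m).mulVec v) := by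
        rw [pow_succ', Matrix.mulVec_mulVec]
      rw [hpw, key _ hne, ih]
      push_cast
      ring
  set N : ℕ := WithBot.unbotD 0 D
  have hit := iter (N + 1)
  have hle := hbound ((X ^ (N + 1)).mulVec v)
  rw [hit] at hle
  have hDne : D ≠ ⊥ := by
    intro hbot
    rw [hbot] at hle
    exact absurd (le_bot_iff.mp hle) (by exact_mod_cast WithBot.coe_ne_bot)
  obtain ⟨d, hd⟩ := WithBot.ne_bot_iff_exists.mp hDne
  rw [← hd] at hle
  have h1 : k + (N + 1) ≤ d := by
    rw [Nat.cast_withBot, Nat.cast_withBot, ← WithBot.coe_add] at hle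
    exact WithBot.coe_le_coe.mp hle
  have hNd : d ≤ N := by simp [N, ← hd]
  omega
end

section
/- Let X ∈ Mat_n(ℂ) and let j : ℂⁿ → ℂ[x] be a ℂ-linear map. Then there exists a unique ℂ-linear map h : ℂⁿ → ℂ[x] such that for every v ∈ ℂⁿ the polynomial j(v) + x·h(v) − h(X·v) is constant (has degree ≤ 0). -/
/-!
Write `h = ∑ hₖ xᵏ`. Comparing coefficients of `xᵏ⁺¹`, the condition says
`hₖ = hₖ₊₁ ∘ X - jₖ₊₁` for all `k`. Since `ℂⁿ` is finite-dimensional, `j` has bounded degree,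
so `h` is obtained by downward recursion starting from the top degree of `j`. The difference
`d` of two solutions satisfies `dₖ = dₖ₊ₘ ∘ Xᵐ` for all `m`, which vanishes once `k + m`
exceeds the (again bounded) degree of `d`.
-/

open Polynomial

variable {R M : Type*} [CommRing R] [AddCommGroup M] [Module R M]

theorem LinearMap.exists_forall_degree_le [Module.Finite R M] (g : M →ₗ[R] R[X]) :
    ∃ D : ℕ, ∀ v, (g v).degree ≤ D := by
  obtain ⟨s, hs⟩ := Module.Finite.fg_top (R := R) (M := M)
  refine ⟨s.sup fun v => (g v).natDegree, fun v => ?_⟩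
  have hrange : LinearMap.range g ≤ degreeLE R (s.sup fun v => (g v).natDegree : ℕ) := by
    rw [LinearMap.range_eq_map, ← hs, Submodule.map_span, Submodule.span_le]
    rintro _ ⟨w, hw, rfl⟩
    exact mem_degreeLE.mpr <| degree_le_natDegree.trans <|
      WithBot.coe_le_coe.mpr <| Finset.le_sup (f := fun v => (g v).natDegree) hw
  exact mem_degreeLE.mp <| hrange ⟨v, rfl⟩

theorem exists_degree_add_X_mul_sub_comp_le_zero (f : M →ₗ[R] M) (D : ℕ)
    (j : M →ₗ[R] R[X]) (hj : ∀ v, (j v).degree ≤ D) :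
    ∃ h : M →ₗ[R] R[X], ∀ v, (j v + X * h v - h (f v)).degree ≤ 0 := by
  induction D generalizing j with
  | zero => exact ⟨0, fun v => by simpa using hj v⟩
  | succ D ih =>
    -- `X * g` cancels the top coefficient of `j`; the error `g ∘ f` only has degree `D`.
    set g : M →ₗ[R] R[X] := -(monomial D ∘ₗ lcoeff R (D + 1) ∘ₗ j)
    set j₁ : M →ₗ[R] R[X] := j + LinearMap.mulLeft R X ∘ₗ g - g ∘ₗ f with hj₁
    have hj₁_apply (v : M) : j₁ v = j v - X * monomial D ((j v).coeff (D + 1))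
        + monomial D ((j (f v)).coeff (D + 1)) := by
      simp only [hj₁, g, LinearMap.sub_apply, LinearMap.add_apply, LinearMap.comp_apply,
        LinearMap.neg_apply, LinearMap.mulLeft_apply, lcoeff_apply]
      ring
    have hdeg (v : M) : (j₁ v).degree ≤ D := by
      rw [degree_le_iff_coeff_zero]
      intro m hm
      have hDm : D < m := mod_cast hm
      obtain ⟨k, rfl⟩ : ∃ k, m = k + 1 := ⟨m - 1, by omega⟩
      rw [hj₁_apply, coeff_add, coeff_sub, coeff_X_mul, coeff_monomial, coeff_monomial]
      rcases eq_or_ne k D with rfl | hkD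
      · simp
      · have htop : (j v).coeff (k + 1) = 0 :=
          coeff_eq_zero_of_degree_lt <| (hj v).trans_lt <| mod_cast (by omega : D + 1 < k + 1)
        have hDk : D ≠ k + 1 := by omega
        simp [htop, hkD.symm, hDk]
    obtain ⟨h₁, hh₁⟩ := ih j₁ hdeg
    refine ⟨g + h₁, fun v => ?_⟩
    convert hh₁ v using 2
    simp only [hj₁, LinearMap.add_apply, LinearMap.sub_apply, LinearMap.comp_apply,
      LinearMap.mulLeft_apply]
    ring

theorem coeff_eq_coeff_add_iterate_of_degree_X_mul_sub_comp_le_zero (f : M →ₗ[R] M)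
    (d : M →ₗ[R] R[X]) (hd : ∀ v, (X * d v - d (f v)).degree ≤ 0) (m k : ℕ) (v : M) :
    (d v).coeff k = (d (f^[m] v)).coeff (k + m) := by
  induction m generalizing k v with
  | zero => simp
  | succ m ih =>
    have hshift : (d v).coeff k = (d (f v)).coeff (k + 1) := by
      have h0 : (X * d v - d (f v)).coeff (k + 1) = 0 :=
        coeff_eq_zero_of_degree_lt <| (hd v).trans_lt <| mod_cast k.succ_pos
      rwa [coeff_sub, coeff_X_mul, sub_eq_zero] at h0
    rw [hshift, ih, Function.iterate_succ_apply, add_right_comm, add_assoc]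

theorem eq_zero_of_degree_X_mul_sub_comp_le_zero [Module.Finite R M] (f : M →ₗ[R] M)
    (d : M →ₗ[R] R[X]) (hd : ∀ v, (X * d v - d (f v)).degree ≤ 0) : d = 0 := by
  obtain ⟨E, hE⟩ := d.exists_forall_degree_le
  ext v k
  rw [LinearMap.zero_apply, coeff_zero,
    coeff_eq_coeff_add_iterate_of_degree_X_mul_sub_comp_le_zero f d hd (E + 1)]
  exact coeff_eq_zero_of_degree_lt <| (hE _).trans_lt <| mod_cast (by omega : E < k + (E + 1))

theorem existsUnique_degree_add_X_mul_sub_comp_le_zero [Module.Finite R M] (f : M →ₗ[R] M)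
    (j : M →ₗ[R] R[X]) :
    ∃! h : M →ₗ[R] R[X], ∀ v, (j v + X * h v - h (f v)).degree ≤ 0 := by
  obtain ⟨D, hD⟩ := j.exists_forall_degree_le
  obtain ⟨h, hh⟩ := exists_degree_add_X_mul_sub_comp_le_zero f D j hD
  refine ⟨h, hh, fun h' hh' => sub_eq_zero.mp <|
    eq_zero_of_degree_X_mul_sub_comp_le_zero f (h' - h) fun v => ?_⟩
  have hdiff : X * (h' - h) v - (h' - h) (f v)
      = (j v + X * h' v - h' (f v)) - (j v + X * h v - h (f v)) := by
    simp only [LinearMap.sub_apply]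
    ring
  rw [hdiff]
  exact (degree_sub_le _ _).trans (max_le (hh' v) (hh v))

/-- For any `X ∈ Mat_n(ℂ)` and `ℂ`-linear `j : ℂⁿ → ℂ[x]` there is a unique `ℂ`-linear
`h : ℂⁿ → ℂ[x]` such that `j(v) + x·h(v) − h(X·v)` is constant (degree `≤ 0`) for all `v`. -/
theorem existsUnique_homotopy_to_constant_j (n : ℕ)
    (X : Matrix (Fin n) (Fin n) ℂ)
    (j : (Fin n → ℂ) →ₗ[ℂ] Polynomial ℂ) :
    ∃! h : (Fin n → ℂ) →ₗ[ℂ] Polynomial ℂ,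
      ∀ v : Fin n → ℂ, (j v + Polynomial.X * h v - h (X.mulVec v)).degree ≤ 0 :=
  existsUnique_degree_add_X_mul_sub_comp_le_zero X.mulVecLin j
end

section
/- Let X, Y ∈ Mat_n(ℂ), i ∈ ℂⁿ, and let j : ℂⁿ → ℂ[x] be a ℂ-linear map satisfying: for every v ∈ ℂⁿ, v + X·Y·v − Y·X·v = (j(v))(X)·i. Then there exist a ℂ-linear map h : ℂⁿ → ℂ[x], a ℂ-linear endomorphism Y′ of ℂⁿ, and a ℂ-linear functional j₀ : ℂⁿ → ℂ such that: (a) Y′(v) = Y·v + (h(v))(X)·i for all v; (b) for all v, j(v) + x·h(v) − h(X·v) equals the constant polynomial j₀(v); and (c) the Calogero-Moser relation holds: for every v ∈ ℂⁿ, v + X·Y′(v) − Y′(X·v) = j₀(v)·i (equivalently, I + X·Y′ − Y′·X equals the rank-one matrix i·j₀ᵀ). Moreover, the triple (h, Y′, j₀) with these properties is unique. -/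
/-!
Write `A` for `v ↦ X v`. The homotopy equation `j v + x·h v − h (A v) = j₀ v` is solved by
`h v = −∑_{m ≥ 0} divX^{m+1} (j (A^m v))`: since `x·divX p = p − p(0)`, the sum telescopes to
`−j v` plus a constant, and it is finite because `j` has bounded degree on the finite-dimensional
space `ℂⁿ`. Two solutions differ by some `g` with `x·g v − g (A v)` constant, i.e.
`g v = divX (g (A v)) = divX^m (g (A^m v))`, which vanishes once `m` exceeds the degree bound.
Evaluating the homotopy equation at `X` and applying it to `i` turns `I + XY − YX = i·j(X)` into
the Calogero–Moser relation for `Y′ = Y + h(X)·i`.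
-/

open Polynomial
open scoped Matrix

namespace Polynomial

variable {R : Type*} [Semiring R]

noncomputable def divXLinearMap : R[X] →ₗ[R] R[X] where
  toFun := divX
  map_add' _ _ := divX_add
  map_smul' c p := by ext; simp [coeff_divX]

@[simp]
theorem coe_divXLinearMap : ⇑(divXLinearMap : R[X] →ₗ[R] R[X]) = divX := rfl

theorem coeff_divX_iterate (m : ℕ) (p : R[X]) (k : ℕ) :
    (divX^[m] p).coeff k = p.coeff (k + m) := by
  induction m generalizing p with
  | zero => rfl
  | succ m ih => rw [Function.iterate_succ_apply, ih, coeff_divX, add_assoc]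

theorem divX_iterate_eq_zero_of_natDegree_lt {m : ℕ} {p : R[X]} (hp : p.natDegree < m) :
    divX^[m] p = 0 := by
  ext k
  rw [coeff_divX_iterate, coeff_zero]
  exact coeff_eq_zero_of_natDegree_lt (by omega)

end Polynomial

theorem LinearMap.exists_natDegree_le {R M : Type*} [Semiring R] [AddCommMonoid M] [Module R M]
    [Module.Finite R M] (F : M →ₗ[R] R[X]) : ∃ D : ℕ, ∀ v, (F v).natDegree ≤ D := by
  obtain ⟨s, hs⟩ := Module.Finite.fg_top (R := R) (M := M)
  refine ⟨s.sup fun v => (F v).natDegree, fun v => natDegree_le_iff_degree_le.mpr ?_⟩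
  have hle : Submodule.span R (s : Set M) ≤ (degreeLE R _).comap F :=
    Submodule.span_le.mpr fun w hw => mem_degreeLE.mpr <|
      degree_le_of_natDegree_le (Finset.le_sup (f := fun v => (F v).natDegree) hw)
  exact mem_degreeLE.mp (hle (hs ▸ Submodule.mem_top))

section Homotopy

variable {R M : Type*} [CommRing R] [AddCommGroup M] [Module R M] [Module.Finite R M]
  (A : Module.End R M)

theorem LinearMap.eq_zero_of_X_mul_sub_comp_eq_C {g : M →ₗ[R] R[X]} {c : M → R}
    (hg : ∀ v, X * g v - g (A v) = C (c v)) : g = 0 := by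
  have hstep : ∀ v, g v = divX (g (A v)) := fun v => by
    ext k
    rw [coeff_divX, ← sub_sub_cancel (X * g v) (g (A v)), hg, coeff_sub, coeff_X_mul,
      coeff_C_succ, sub_zero]
  have hiter : ∀ m v, g v = divX^[m] (g ((A ^ m) v)) := by
    intro m
    induction m with
    | zero => exact fun v => rfl
    | succ m ih =>
      intro v
      rw [ih, hstep, pow_succ', Module.End.mul_apply, Function.iterate_succ_apply]
  obtain ⟨D, hD⟩ := g.exists_natDegree_le
  ext1 v
  rw [hiter (D + 1), divX_iterate_eq_zero_of_natDegree_lt (Nat.lt_succ_of_le (hD _))]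
  rfl

theorem LinearMap.exists_add_X_mul_sub_comp_eq_C (j : M →ₗ[R] R[X]) :
    ∃ (h : M →ₗ[R] R[X]) (j₀ : M →ₗ[R] R), ∀ v, j v + X * h v - h (A v) = C (j₀ v) := by
  obtain ⟨D, hD⟩ := j.exists_natDegree_le
  let q : ℕ → M →ₗ[R] R[X] := fun m => (divXLinearMap ^ m) ∘ₗ j ∘ₗ (A ^ m)
  refine ⟨-∑ m ∈ Finset.range (D + 1), divXLinearMap ∘ₗ q m,
    ∑ m ∈ Finset.range (D + 1), lcoeff R 0 ∘ₗ q m, fun v => ?_⟩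
  have hq_apply : ∀ m v, q m v = divX^[m] (j (A^[m] v)) := fun m v => by
    simp only [q, LinearMap.comp_apply, Module.End.pow_apply, coe_divXLinearMap]
  have hq_succ : ∀ m, divX (q m (A v)) = q (m + 1) v := fun m => by
    rw [hq_apply, hq_apply, ← Function.iterate_succ_apply' divX, Function.iterate_succ_apply A]
  have hq_last : q (D + 1) v = 0 := by
    rw [hq_apply, divX_iterate_eq_zero_of_natDegree_lt (Nat.lt_succ_of_le (hD _))]
  have X_mul_divX : ∀ p : R[X], X * divX p = p - C (p.coeff 0) := fun p =>
    eq_sub_of_add_eq (X_mul_divX_add p)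
  simp only [LinearMap.neg_apply, LinearMap.coe_sum, Finset.sum_apply, LinearMap.comp_apply,
    coe_divXLinearMap, lcoeff_apply, mul_neg, Finset.mul_sum, X_mul_divX, hq_succ]
  have htelescope := Finset.sum_range_sub' (fun m => q m v) (D + 1)
  rw [Finset.sum_sub_distrib, hq_last, hq_apply 0, Function.iterate_zero_apply,
    Function.iterate_zero_apply, sub_zero] at htelescope
  rw [Finset.sum_sub_distrib, map_sum]
  linear_combination -htelescope

end Homotopy

theorem Matrix.mulVec_sub_mulVec_eq_smul_of_homotopy {ι R : Type*} [Fintype ι] [DecidableEq ι]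
    [CommRing R] {X Y : Matrix ι ι R} {i : ι → R} {j h : (ι → R) → R[X]} {j₀ : (ι → R) → R}
    {Y' : (ι → R) → ι → R} (hrel : ∀ v, v + (X * Y) *ᵥ v - (Y * X) *ᵥ v = aeval X (j v) *ᵥ i)
    (hhom : ∀ v, j v + Polynomial.X * h v - h (X *ᵥ v) = C (j₀ v))
    (hY' : ∀ v, Y' v = Y *ᵥ v + aeval X (h v) *ᵥ i) (v : ι → R) :
    v + X *ᵥ Y' v - Y' (X *ᵥ v) = j₀ v • i := by
  have hhom_at_i := congrArg (fun p => aeval X p *ᵥ i) (hhom v)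
  simp only [map_sub, map_add, map_mul, aeval_X, aeval_C, Matrix.sub_mulVec, Matrix.add_mulVec,
    ← Matrix.mulVec_mulVec, Algebra.algebraMap_eq_smul_one, Matrix.smul_mulVec,
    Matrix.one_mulVec] at hhom_at_i
  rw [hY', hY', Matrix.mulVec_add, ← hhom_at_i, ← hrel]
  simp only [← Matrix.mulVec_mulVec]
  abel

/-- Every quadruple `(X, Y, i, j(x))` with `I + XY − YX = i·j(X)` is homotopic via a unique
homotopy `h` to a unique Calogero-Moser quadruple `(X, Y′, i, j₀)`: there is a unique triple
`(h, Y′, j₀)` with (a) `Y′(v) = Y·v + (h v)(X)·i`; (b) `j(v) + x·h(v) − h(X·v)` is the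
constant polynomial `j₀(v)`; (c) `v + X·Y′(v) − Y′(X·v) = j₀(v)·i` for all `v`. -/
theorem existsUnique_CM_quadruple_in_homotopy_class (n : ℕ)
    (X Y : Matrix (Fin n) (Fin n) ℂ) (i : Fin n → ℂ)
    (j : (Fin n → ℂ) →ₗ[ℂ] Polynomial ℂ)
    (hrel : ∀ v : Fin n → ℂ,
      v + (X * Y).mulVec v - (Y * X).mulVec v = (Polynomial.aeval X (j v)).mulVec i) :
    ∃! t : ((Fin n → ℂ) →ₗ[ℂ] Polynomial ℂ) ×
        ((Fin n → ℂ) →ₗ[ℂ] (Fin n → ℂ)) × ((Fin n → ℂ) →ₗ[ℂ] ℂ),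
      (∀ v : Fin n → ℂ,
        t.2.1 v = Y.mulVec v + (Polynomial.aeval X (t.1 v)).mulVec i) ∧
      (∀ v : Fin n → ℂ,
        j v + Polynomial.X * t.1 v - t.1 (X.mulVec v) = Polynomial.C (t.2.2 v)) ∧
      (∀ v : Fin n → ℂ,
        v + X.mulVec (t.2.1 v) - t.2.1 (X.mulVec v) = t.2.2 v • i) := by
  obtain ⟨h, j₀, hhom⟩ := LinearMap.exists_add_X_mul_sub_comp_eq_C X.mulVecLin j
  simp only [Matrix.mulVecLin_apply] at hhom
  let Y' := Y.mulVecLin + (Matrix.mulVecBilin ℂ ℂ).flip i ∘ₗ (aeval X).toLinearMap ∘ₗ h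
  have hY' : ∀ v, Y' v = Y *ᵥ v + aeval X (h v) *ᵥ i := fun v => rfl
  refine ⟨(h, Y', j₀), ⟨hY', hhom, Matrix.mulVec_sub_mulVec_eq_smul_of_homotopy hrel hhom hY'⟩, ?_⟩
  rintro ⟨h₁, Y₁, j₀₁⟩ ⟨hY₁, hhom₁, -⟩
  obtain rfl : h₁ = h := sub_eq_zero.mp <|
    LinearMap.eq_zero_of_X_mul_sub_comp_eq_C X.mulVecLin (c := fun v => j₀₁ v - j₀ v) fun v => by
      simp only [LinearMap.sub_apply, map_sub, Matrix.mulVecLin_apply]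
      linear_combination hhom₁ v - hhom v
  obtain rfl : j₀₁ = j₀ := LinearMap.ext fun v => C_injective ((hhom₁ v).symm.trans (hhom v))
  obtain rfl : Y₁ = Y' := LinearMap.ext fun v => (hY₁ v).trans (hY' v).symm
  rfl
end
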